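/- Let A, B, C ∈ ℂ^{r×r} with C + nI invertible for all integers n ≥ 0, let B and C commute, and let |x| < 1. (i) If A + kI is invertible for all integers k ≥ 0, then for every non-negative integer s: ₂F₁(A+sI, B; C; x) = ∑_{k=0}^{s} (s choose k) x^k ·[₂F₁(A+kI, B+kI; C+kI; x)]·(B)_k·(C)_k⁻¹. (ii) If moreover A − kI is invertible for all integers 1 ≤ k ≤ s, then ₂F₁(A−sI, B; C; x) = ∑_{k=0}^{s} (s choose k) (−x)^k ·[₂F₁(A, B+kI; C+kI; x)]·(B)_k·(C)_k⁻¹. -/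

import Mathlib

/-!
The contiguous relation `F(A+1, B; C) = F(A, B; C) + x F(A+1, B+1; C+1) B C⁻¹` holds termwise,
by `(A+1)_{n+1} - (A)_{n+1} = (n+1) (A+1)_n`, once `B C⁻¹` is moved past the Pochhammer factors
using `BC = CB`. For `G(A, k) = F(A, B+kI; C+kI) (B)_k (C)_k⁻¹` it reads
`G(A+I, k) = G(A, k) + x G(A+I, k+1)`, a Pascal recurrence that iterates to a binomial expansion:
along `A + (a+k)I` for (i), and along `A - aI` with `-x` in place of `x` for (ii).
The series converge for `|x| < 1` by the ratio test applied to a scalar majorant, using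
`‖(C + nI)⁻¹‖ ≤ (n - ‖C‖)⁻¹` for large `n`.
-/

open Finset Filter Topology

/-- The shifted factorial (Pochhammer) matrix: `(A)_0 = I`, `(A)_{n+1} = (A)_n (A + nI)`. -/
noncomputable def mPoch {r : ℕ} (A : Matrix (Fin r) (Fin r) ℂ) : ℕ → Matrix (Fin r) (Fin r) ℂ
  | 0 => 1
  | n + 1 => mPoch A n * (A + (n : ℂ) • 1)

/-- The Gauss hypergeometric matrix function `₂F₁(A, B; C; x)`. -/
noncomputable def hypF21 {r : ℕ} (A B C : Matrix (Fin r) (Fin r) ℂ) (x : ℂ) :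
    Matrix (Fin r) (Fin r) ℂ :=
  ∑' n : ℕ, ((n.factorial : ℂ)⁻¹ * x ^ n) • (mPoch A n * mPoch B n * (mPoch C n)⁻¹)

theorem eq_sum_choose_mul_pow_smul_of_succ {R M : Type*} [Semiring R] [AddCommMonoid M]
    [Module R M] (u : ℕ → ℕ → M) (c : R) (h : ∀ a b, u (a + 1) b = u a b + c • u a (b + 1))
    (s b : ℕ) : u s b = ∑ k ∈ range (s + 1), ((s.choose k : R) * c ^ k) • u 0 (b + k) := by
  induction s generalizing b with
  | zero => simp
  | succ s ih =>
    set v : ℕ → M := fun k => u 0 (b + k)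
    have shift : ∑ k ∈ range (s + 1), (s.choose k * c ^ k) • v k =
        ∑ k ∈ range (s + 1), (s.choose (k + 1) * c ^ (k + 1)) • v (k + 1) + v 0 := by
      rw [sum_range_succ', sum_range_succ (fun k => (s.choose (k + 1) * c ^ (k + 1)) • v (k + 1))]
      simp
    have pascal : ∑ k ∈ range (s + 2), ((s + 1).choose k * c ^ k) • v k =
        ∑ k ∈ range (s + 1), (s.choose k * c ^ k) • v k +
          ∑ k ∈ range (s + 1), (s.choose k * c ^ (k + 1)) • v (k + 1) := by
      rw [sum_range_succ', shift]
      simp only [Nat.choose_succ_succ, Nat.cast_add, add_mul, add_smul, sum_add_distrib,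
        Nat.choose_zero_right, Nat.cast_one, pow_zero, one_mul, one_smul]
      abel
    rw [h, ih, ih, pascal, smul_sum]
    congr 1
    refine sum_congr rfl fun k _ => ?_
    rw [smul_smul, ← mul_assoc, ← Nat.cast_comm, mul_assoc, ← pow_succ', add_assoc, add_comm 1 k]

-- `Y⁻¹ = 0` when `Y` is singular, so no invertibility is needed.
theorem Matrix.commute_inv_right {n α : Type*} [Fintype n] [DecidableEq n] [CommRing α]
    {X Y : Matrix n n α} (h : Commute X Y) : Commute X Y⁻¹ := by
  simpa using Matrix.Commute.zpow_right h (-1)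

theorem Commute.add_smul_one {R M : Type*} [CommSemiring R] [Semiring M] [Algebra R M]
    {X Y : M} (h : Commute X Y) (a b : R) : Commute (X + a • 1) (Y + b • 1) := by
  have central : ∀ (c : R) (Z : M), Commute (c • 1) Z := fun c Z => (Commute.one_left Z).smul_left c
  exact (h.add_right (central b X).symm).add_left ((central a Y).add_right (central a _))

section Pochhammer

variable {r : ℕ} {A B C : Matrix (Fin r) (Fin r) ℂ}

theorem commute_mPoch_right {X : Matrix (Fin r) (Fin r) ℂ} (h : Commute X A) (n : ℕ) :
    Commute X (mPoch A n) := by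
  induction n with
  | zero => exact Commute.one_right X
  | succ n ih => exact ih.mul_right (by simpa using h.add_smul_one (0 : ℂ) (n : ℂ))

theorem add_natCast_smul_one_add (X : Matrix (Fin r) (Fin r) ℂ) (m n : ℕ) :
    X + (m : ℂ) • 1 + (n : ℂ) • 1 = X + ((m + n : ℕ) : ℂ) • 1 := by
  rw [Nat.cast_add, add_smul, add_assoc]

theorem add_natCast_smul_one_add_one (X : Matrix (Fin r) (Fin r) ℂ) (n : ℕ) :
    X + (n : ℂ) • 1 + 1 = X + ((n + 1 : ℕ) : ℂ) • 1 := by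
  rw [← add_natCast_smul_one_add, Nat.cast_one, one_smul]

theorem mPoch_succ' (A : Matrix (Fin r) (Fin r) ℂ) (n : ℕ) :
    mPoch A (n + 1) = A * mPoch (A + 1) n := by
  induction n with
  | zero => simp [mPoch]
  | succ n ih =>
    rw [mPoch, ih, mPoch, mul_assoc, ← add_natCast_smul_one_add_one, add_right_comm]

theorem mPoch_add_one_succ_sub (A : Matrix (Fin r) (Fin r) ℂ) (n : ℕ) :
    mPoch (A + 1) (n + 1) - mPoch A (n + 1) = ((n : ℂ) + 1) • mPoch (A + 1) n := by
  have hA : Commute (mPoch (A + 1) n) A :=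
    (commute_mPoch_right ((Commute.refl A).add_right (Commute.one_right A)) n).symm
  rw [mPoch, mPoch_succ', ← hA.eq, ← mul_sub, add_assoc, add_sub_cancel_left, mul_add, mul_one,
    Matrix.mul_smul, mul_one, add_smul, one_smul, add_comm]

theorem mPoch_succ_mul_inv (hBC : Commute B C) (n : ℕ) :
    mPoch B (n + 1) * (mPoch C (n + 1))⁻¹ =
      mPoch (B + 1) n * (mPoch (C + 1) n)⁻¹ * (B * C⁻¹) := by
  have hB : Commute B (mPoch (B + 1) n) :=
    commute_mPoch_right ((Commute.refl B).add_right (Commute.one_right B)) n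
  have hC : Commute B (mPoch (C + 1) n)⁻¹ :=
    Matrix.commute_inv_right (commute_mPoch_right (hBC.add_right (Commute.one_right B)) n)
  rw [mPoch_succ', mPoch_succ', Matrix.mul_inv_rev, hB.eq, mul_assoc, ← mul_assoc B, hC.eq]
  simp only [mul_assoc]

theorem mPoch_succ_mul_inv' (hBC : Commute B C) (n : ℕ) :
    mPoch B (n + 1) * (mPoch C (n + 1))⁻¹ =
      (B + (n : ℂ) • 1) * (C + (n : ℂ) • 1)⁻¹ * (mPoch B n * (mPoch C n)⁻¹) := by
  have hB : Commute (mPoch B n) (B + (n : ℂ) • 1) :=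
    (commute_mPoch_right (by simpa using (Commute.refl B).add_smul_one (n : ℂ) 0) n).symm
  have hC : Commute (mPoch B n) (C + (n : ℂ) • 1)⁻¹ :=
    Matrix.commute_inv_right
      (commute_mPoch_right (by simpa using hBC.symm.add_smul_one (n : ℂ) 0) n).symm
  rw [mPoch, mPoch, Matrix.mul_inv_rev, ← mul_assoc, mul_assoc (mPoch B n), (hB.mul_right hC).eq]
  simp only [mul_assoc]

noncomputable def hypF21Term (A B C : Matrix (Fin r) (Fin r) ℂ) (x : ℂ) (n : ℕ) :
    Matrix (Fin r) (Fin r) ℂ :=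
  ((n.factorial : ℂ)⁻¹ * x ^ n) • (mPoch A n * mPoch B n * (mPoch C n)⁻¹)

theorem hypF21Term_add_one_succ_sub (hBC : Commute B C) (A : Matrix (Fin r) (Fin r) ℂ) (x : ℂ)
    (n : ℕ) :
    hypF21Term (A + 1) B C x (n + 1) - hypF21Term A B C x (n + 1) =
      x • (hypF21Term (A + 1) (B + 1) (C + 1) x n * (B * C⁻¹)) := by
  have scalar : ((n + 1).factorial : ℂ)⁻¹ * x ^ (n + 1) * ((n : ℂ) + 1) =
      x * ((n.factorial : ℂ)⁻¹ * x ^ n) := by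
    rw [Nat.factorial_succ, Nat.cast_mul, Nat.cast_succ]
    field_simp
    ring
  rw [hypF21Term, hypF21Term, hypF21Term, ← smul_sub, ← sub_mul, ← sub_mul,
    mPoch_add_one_succ_sub, smul_mul_assoc, smul_mul_assoc, smul_smul, scalar, mul_assoc,
    mPoch_succ_mul_inv hBC, smul_mul_assoc, smul_smul]
  simp only [mul_assoc]

end Pochhammer

theorem summable_of_norm_le_prod {E : Type*} [SeminormedAddCommGroup E] [CompleteSpace E]
    {f : ℕ → E} {ρ : ℕ → ℝ} {l : ℝ} (hl : l < 1) (hρ : ∀ k, 0 ≤ ρ k)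
    (hρl : ∀ᶠ k in atTop, ρ k ≤ l) (hf : ∀ n, ‖f n‖ ≤ ∏ k ∈ range n, ρ k) : Summable f := by
  refine .of_norm_bounded (summable_of_ratio_norm_eventually_le hl ?_) hf
  filter_upwards [hρl] with k hk
  have hprod : 0 ≤ ∏ i ∈ range k, ρ i := prod_nonneg fun i _ => hρ i
  rw [prod_range_succ, Real.norm_of_nonneg (mul_nonneg hprod (hρ k)),
    Real.norm_of_nonneg hprod, mul_comm l]
  exact mul_le_mul_of_nonneg_left hk hprod

section Norm

attribute [local instance] Matrix.linftyOpNormedAddCommGroup Matrix.linftyOpNormedRing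
  Matrix.linftyOpNormedAlgebra

variable {r : ℕ} {A B C : Matrix (Fin r) (Fin r) ℂ} {x : ℂ}

section Nonempty

variable [Nonempty (Fin r)]

theorem norm_mPoch_le (A : Matrix (Fin r) (Fin r) ℂ) (n : ℕ) :
    ‖mPoch A n‖ ≤ ∏ k ∈ range n, (‖A‖ + k) := by
  induction n with
  | zero => simp [mPoch]
  | succ n ih =>
    rw [mPoch, prod_range_succ]
    refine (norm_mul_le _ _).trans (mul_le_mul ih ?_ (norm_nonneg _) (by positivity))
    simpa using norm_add_le A ((n : ℂ) • (1 : Matrix (Fin r) (Fin r) ℂ))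

theorem norm_inv_mPoch_le (C : Matrix (Fin r) (Fin r) ℂ) (n : ℕ) :
    ‖(mPoch C n)⁻¹‖ ≤ ∏ k ∈ range n, ‖(C + (k : ℂ) • 1)⁻¹‖ := by
  induction n with
  | zero => simp [mPoch]
  | succ n ih =>
    rw [mPoch, Matrix.mul_inv_rev, prod_range_succ, mul_comm (∏ k ∈ range n, _)]
    exact (norm_mul_le _ _).trans (mul_le_mul_of_nonneg_left ih (norm_nonneg _))

theorem norm_inv_add_natCast_smul_one_le {n : ℕ} (hCn : IsUnit (C + (n : ℂ) • 1))
    (hn : ‖C‖ < n) : ‖(C + (n : ℂ) • 1)⁻¹‖ ≤ ((n : ℝ) - ‖C‖)⁻¹ := by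
  set u := (C + (n : ℂ) • 1)⁻¹
  have hu : (n : ℂ) • u = 1 - C * u := by
    rw [eq_sub_iff_add_eq', ← smul_one_mul, ← add_mul,
      Matrix.mul_nonsing_inv _ ((Matrix.isUnit_iff_isUnit_det _).mp hCn)]
  have hle : (n : ℝ) * ‖u‖ ≤ 1 + ‖C‖ * ‖u‖ := by
    calc (n : ℝ) * ‖u‖ = ‖(n : ℂ) • u‖ := by rw [norm_smul, Complex.norm_natCast]
      _ = ‖1 - C * u‖ := by rw [hu]
      _ ≤ ‖(1 : Matrix (Fin r) (Fin r) ℂ)‖ + ‖C * u‖ := norm_sub_le _ _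
      _ ≤ 1 + ‖C‖ * ‖u‖ := by rw [norm_one]; gcongr; exact norm_mul_le _ _
  rw [← one_div, le_div_iff₀ (sub_pos.mpr hn)]
  linarith

theorem norm_hypF21Term_le (A B C : Matrix (Fin r) (Fin r) ℂ) (x : ℂ) (n : ℕ) :
    ‖hypF21Term A B C x n‖ ≤
      ∏ k ∈ range n, ‖x‖ * ((‖A‖ + k) / (1 + k)) * ((‖B‖ + k) * ‖(C + (k : ℂ) • 1)⁻¹‖) := by
  have hscalar : ‖(n.factorial : ℂ)⁻¹ * x ^ n‖ = ∏ k ∈ range n, ‖x‖ / (1 + k) := by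
    rw [norm_mul, norm_inv, norm_pow, Complex.norm_natCast, prod_div_distrib, prod_const,
      card_range, ← prod_range_add_one_eq_factorial, Nat.cast_prod]
    simp only [Nat.cast_add, Nat.cast_one, add_comm, div_eq_inv_mul]
  have hmatrix : ‖mPoch A n * mPoch B n * (mPoch C n)⁻¹‖ ≤
      (∏ k ∈ range n, (‖A‖ + k)) * (∏ k ∈ range n, (‖B‖ + k)) *
        ∏ k ∈ range n, ‖(C + (k : ℂ) • 1)⁻¹‖ := by
    refine norm_mul₃_le.trans ?_
    gcongr
    exacts [norm_mPoch_le A n, norm_mPoch_le B n, norm_inv_mPoch_le C n]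
  rw [hypF21Term, norm_smul, hscalar]
  refine (mul_le_mul_of_nonneg_left hmatrix (by positivity)).trans_eq ?_
  simp only [← prod_mul_distrib]
  exact prod_congr rfl fun k _ => by ring

end Nonempty

theorem summable_hypF21Term (hC : ∀ n : ℕ, IsUnit (C + (n : ℂ) • 1)) (hx : ‖x‖ < 1) :
    Summable (hypF21Term A B C x) := by
  cases isEmpty_or_nonempty (Fin r) with
  | inl _ => exact (Subsingleton.elim _ 0 : hypF21Term A B C x = 0) ▸ summable_zero
  | inr _ =>
    obtain ⟨l, hxl, hl1⟩ := exists_between hx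
    have ratio (a b : ℝ) : Tendsto (fun k : ℕ => (a + k) / (b + k)) atTop (𝓝 1) := by
      simpa using tendsto_add_mul_div_add_mul_atTop_nhds a b 1 one_ne_zero
    have hσ : Tendsto (fun k : ℕ => ‖x‖ * ((‖A‖ + k) / (1 + k)) * ((‖B‖ + k) / (-‖C‖ + k)))
        atTop (𝓝 ‖x‖) := by
      simpa using (tendsto_const_nhds.mul (ratio ‖A‖ 1)).mul (ratio ‖B‖ (-‖C‖))
    refine summable_of_norm_le_prod hl1 (fun k => by positivity) ?_ (norm_hypF21Term_le A B C x)
    filter_upwards [hσ.eventually_lt_const hxl,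
      tendsto_natCast_atTop_atTop.eventually_gt_atTop ‖C‖] with k hσk hk
    refine le_trans ?_ hσk.le
    rw [neg_add_eq_sub, div_eq_mul_inv (‖B‖ + k)]
    gcongr
    exact norm_inv_add_natCast_smul_one_le (hC k) hk

end Norm

section Contiguous

variable {r : ℕ} {B C : Matrix (Fin r) (Fin r) ℂ} {x : ℂ}

theorem hypF21_add_one (hBC : Commute B C) (hC : ∀ n : ℕ, IsUnit (C + (n : ℂ) • 1))
    (hx : ‖x‖ < 1) (A : Matrix (Fin r) (Fin r) ℂ) :
    hypF21 (A + 1) B C x = hypF21 A B C x + x • (hypF21 (A + 1) (B + 1) (C + 1) x * (B * C⁻¹)) := by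
  have hC' (n : ℕ) : IsUnit (C + 1 + (n : ℂ) • 1) := by
    rw [add_right_comm, add_natCast_smul_one_add_one]
    exact hC (n + 1)
  have S₁ := summable_hypF21Term (A := A + 1) (B := B) hC hx
  have S₂ := summable_hypF21Term (A := A) (B := B) hC hx
  have S₃ := summable_hypF21Term (A := A + 1) (B := B + 1) hC' hx
  rw [← sub_eq_iff_eq_add']
  calc hypF21 (A + 1) B C x - hypF21 A B C x
      = ∑' n, (hypF21Term (A + 1) B C x n - hypF21Term A B C x n) := (S₁.tsum_sub S₂).symm
    _ = ∑' n, (hypF21Term (A + 1) B C x (n + 1) - hypF21Term A B C x (n + 1)) := by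
      rw [(S₁.sub S₂).tsum_eq_zero_add]
      simp [hypF21Term, mPoch]
    _ = ∑' n, x • (hypF21Term (A + 1) (B + 1) (C + 1) x n * (B * C⁻¹)) :=
      tsum_congr (hypF21Term_add_one_succ_sub hBC A x)
    _ = x • (hypF21 (A + 1) (B + 1) (C + 1) x * (B * C⁻¹)) := by
      rw [(S₃.mul_right _).tsum_const_smul, S₃.tsum_mul_right]
      rfl

noncomputable def hypF21Shifted (A B C : Matrix (Fin r) (Fin r) ℂ) (x : ℂ) (k : ℕ) :
    Matrix (Fin r) (Fin r) ℂ :=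
  hypF21 A (B + (k : ℂ) • 1) (C + (k : ℂ) • 1) x * mPoch B k * (mPoch C k)⁻¹

theorem hypF21Shifted_add_one (hBC : Commute B C) (hC : ∀ n : ℕ, IsUnit (C + (n : ℂ) • 1))
    (hx : ‖x‖ < 1) (A : Matrix (Fin r) (Fin r) ℂ) (k : ℕ) :
    hypF21Shifted (A + 1) B C x k =
      hypF21Shifted A B C x k + x • hypF21Shifted (A + 1) B C x (k + 1) := by
  have hCk (n : ℕ) : IsUnit (C + (k : ℂ) • 1 + (n : ℂ) • 1) := by
    rw [add_natCast_smul_one_add]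
    exact hC (k + n)
  rw [hypF21Shifted, hypF21Shifted, hypF21Shifted,
    hypF21_add_one (hBC.add_smul_one (k : ℂ) (k : ℂ)) hCk hx, add_mul, add_mul, smul_mul_assoc,
    smul_mul_assoc, add_natCast_smul_one_add_one, add_natCast_smul_one_add_one,
    mul_assoc (hypF21 _ _ _ x) (mPoch B (k + 1)), mPoch_succ_mul_inv' hBC]
  simp only [mul_assoc]

theorem hypF21_add_natCast_smul_one (hBC : Commute B C) (hC : ∀ n : ℕ, IsUnit (C + (n : ℂ) • 1))
    (hx : ‖x‖ < 1) (A : Matrix (Fin r) (Fin r) ℂ) (s : ℕ) :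
    hypF21 (A + (s : ℂ) • 1) B C x =
      ∑ k ∈ range (s + 1), ((s.choose k : ℂ) * x ^ k) •
        (hypF21 (A + (k : ℂ) • 1) (B + (k : ℂ) • 1) (C + (k : ℂ) • 1) x *
          mPoch B k * (mPoch C k)⁻¹) := by
  have h := eq_sum_choose_mul_pow_smul_of_succ
    (fun a b => hypF21Shifted (A + ((a + b : ℕ) : ℂ) • 1) B C x b) x (fun a b => ?_) s 0
  · simpa only [hypF21Shifted, zero_add, add_zero, Nat.cast_zero, zero_smul, mPoch, inv_one,
      mul_one] using h
  · rw [add_right_comm a 1 b, ← add_assoc a b 1, ← add_natCast_smul_one_add_one,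
      hypF21Shifted_add_one hBC hC hx]

theorem hypF21_sub_natCast_smul_one (hBC : Commute B C) (hC : ∀ n : ℕ, IsUnit (C + (n : ℂ) • 1))
    (hx : ‖x‖ < 1) (A : Matrix (Fin r) (Fin r) ℂ) (s : ℕ) :
    hypF21 (A - (s : ℂ) • 1) B C x =
      ∑ k ∈ range (s + 1), ((s.choose k : ℂ) * (-x) ^ k) •
        (hypF21 A (B + (k : ℂ) • 1) (C + (k : ℂ) • 1) x * mPoch B k * (mPoch C k)⁻¹) := by
  have h := eq_sum_choose_mul_pow_smul_of_succ
    (fun a b => hypF21Shifted (A - (a : ℂ) • 1) B C x b) (-x) (fun a b => ?_) s 0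
  · simpa only [hypF21Shifted, zero_add, add_zero, Nat.cast_zero, zero_smul, sub_zero, mPoch,
      inv_one, mul_one] using h
  · have e : A - (a : ℂ) • 1 = A - ((a + 1 : ℕ) : ℂ) • 1 + 1 := by
      rw [Nat.cast_succ, add_smul, one_smul, sub_add_eq_sub_sub, sub_add_cancel]
    rw [neg_smul, ← sub_eq_add_neg, eq_sub_iff_add_eq, e]
    exact (hypF21Shifted_add_one hBC hC hx _ b).symm

end Contiguous

theorem hypF21_recursion_A_binom {r : ℕ} (A B C : Matrix (Fin r) (Fin r) ℂ) (x : ℂ)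
    (hC : ∀ n : ℕ, IsUnit (C + (n : ℂ) • (1 : Matrix (Fin r) (Fin r) ℂ)))
    (hBC : B * C = C * B) (hx : ‖x‖ < 1) :
    ((∀ k : ℕ, IsUnit (A + (k : ℂ) • (1 : Matrix (Fin r) (Fin r) ℂ))) →
      ∀ s : ℕ,
        hypF21 (A + (s : ℂ) • 1) B C x =
          ∑ k ∈ Finset.range (s + 1),
            ((s.choose k : ℂ) * x ^ k) •
              (hypF21 (A + (k : ℂ) • 1) (B + (k : ℂ) • 1) (C + (k : ℂ) • 1) x *
                mPoch B k * (mPoch C k)⁻¹)) ∧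
    ((∀ k : ℕ, IsUnit (A + (k : ℂ) • (1 : Matrix (Fin r) (Fin r) ℂ))) →
      ∀ s : ℕ,
        (∀ k : ℕ, 1 ≤ k → k ≤ s → IsUnit (A - (k : ℂ) • (1 : Matrix (Fin r) (Fin r) ℂ))) →
        hypF21 (A - (s : ℂ) • 1) B C x =
          ∑ k ∈ Finset.range (s + 1),
            ((s.choose k : ℂ) * (-x) ^ k) •
              (hypF21 A (B + (k : ℂ) • 1) (C + (k : ℂ) • 1) x *
                mPoch B k * (mPoch C k)⁻¹)) :=
  ⟨fun _ s => hypF21_add_natCast_smul_one hBC hC hx A s,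
    fun _ s _ => hypF21_sub_natCast_smul_one hBC hC hx A s⟩
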